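/- Let g : ℝᵈ → ℝ satisfy g(h) = ½ hᵀIh + r(h) where I is symmetric positive definite and r(h) = o(‖h‖²) as h → 0. Let A be symmetric positive definite. Then as δ → 0, inf over {h : hᵀAh = δ²} of g(h) = ½ δ² λ_min(A^{-1/2}IA^{-1/2}) + o(δ²). -/

import Mathlib

/-!
Substituting `h = A^{-1/2} u` turns the constraint `hᵀAh = δ²` into the sphere `‖u‖ = δ` and the
quadratic part of `g` into `½ uᵀMu` with `M = A^{-1/2} I A^{-1/2}`, whose minimum on that sphere is
`½ λ_min(M) δ²`, attained at an eigenvector. Since `‖h‖ ≤ ‖A^{-1/2}‖ ‖u‖`, the remainder `r(h)` is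
`o(δ²)` uniformly on the sphere, so it moves the infimum by `o(δ²)` only.
-/

open Matrix Filter Asymptotics MeasureTheory
open scoped Topology

noncomputable def minEig {d : ℕ} (M : Matrix (Fin d) (Fin d) ℝ) : ℝ := sInf (spectrum ℝ M)

open Classical in
noncomputable def sqrtInv {d : ℕ} (A : Matrix (Fin d) (Fin d) ℝ) : Matrix (Fin d) (Fin d) ℝ :=
  if h : A.PosSemidef then ((h.1.eigenvectorUnitary : Matrix (Fin d) (Fin d) ℝ) *
    diagonal (fun i => Real.sqrt (h.1.eigenvalues i)) *
    (star h.1.eigenvectorUnitary : Matrix (Fin d) (Fin d) ℝ))⁻¹ else 0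

noncomputable def quadForm {d : ℕ} (M : Matrix (Fin d) (Fin d) ℝ) (v : EuclideanSpace ℝ (Fin d)) : ℝ :=
  (inner ℝ v (Matrix.toEuclideanLin M v) : ℝ)

open Metric

lemma abs_sInf_sub_le {X : Set ℝ} {a e : ℝ} (hlow : ∀ x ∈ X, a - e ≤ x)
    (hup : ∃ x ∈ X, x ≤ a + e) : |sInf X - a| ≤ e := by
  obtain ⟨x, hxX, hx⟩ := hup
  have hle : sInf X ≤ x := csInf_le ⟨a - e, hlow⟩ hxX
  have hge : a - e ≤ sInf X := le_csInf ⟨x, hxX⟩ hlow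
  rw [abs_le]
  constructor <;> linarith

namespace Asymptotics.IsLittleO

variable {E F : Type*} [SeminormedAddCommGroup E] [SeminormedAddCommGroup F]

lemma eventually_forall_mem_sphere_abs_le {ρ : E → ℝ} (hρ : ρ =o[𝓝 0] fun u => ‖u‖ ^ 2)
    {ε : ℝ} (hε : 0 < ε) : ∀ᶠ δ in 𝓝 (0 : ℝ), ∀ u ∈ sphere (0 : E) δ, |ρ u| ≤ ε * δ ^ 2 := by
  obtain ⟨η, hη, hball⟩ := Metric.eventually_nhds_iff.1 (hρ.def hε)
  filter_upwards [eventually_lt_nhds hη] with δ hδ u hu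
  rw [mem_sphere_zero_iff_norm] at hu
  simpa [hu] using @hball u (by rwa [dist_zero_right, hu])

lemma comp_continuousLinearMap_sq [NormedSpace ℝ E] [NormedSpace ℝ F] {r : F → ℝ}
    (hr : r =o[𝓝 0] fun h => ‖h‖ ^ 2) (L : E →L[ℝ] F) :
    (fun u => r (L u)) =o[𝓝 0] fun u => ‖u‖ ^ 2 :=
  (hr.comp_tendsto (L.continuous.tendsto' 0 0 (map_zero L))).trans_isBigO
    ((L.isBigO_id _).norm_norm.pow 2)

end Asymptotics.IsLittleO

lemma isLittleO_sInf_image_sphere_sub {E : Type*} [SeminormedAddCommGroup E] [NormedSpace ℝ E]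
    {q ρ : E → ℝ} {c : ℝ} (hq : ∀ u, c * ‖u‖ ^ 2 ≤ q u) {v : E} (hv : ‖v‖ = 1)
    (hqv : ∀ t, q (t • v) = c * t ^ 2) (hρ : ρ =o[𝓝 0] fun u => ‖u‖ ^ 2) :
    (fun δ => sInf ((fun u => q u + ρ u) '' sphere 0 δ) - c * δ ^ 2)
      =o[𝓝[>] 0] fun δ => δ ^ 2 := by
  refine isLittleO_iff.2 fun ε hε => ?_
  filter_upwards [nhdsWithin_le_nhds (hρ.eventually_forall_mem_sphere_abs_le hε),
    self_mem_nhdsWithin] with δ hρδ (hδ : 0 < δ)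
  have hδv : δ • v ∈ sphere (0 : E) δ := by
    rw [mem_sphere_zero_iff_norm, norm_smul, hv, mul_one, Real.norm_of_nonneg hδ.le]
  rw [Real.norm_of_nonneg (sq_nonneg δ), Real.norm_eq_abs]
  refine abs_sInf_sub_le ?_ ⟨_, ⟨δ • v, hδv, rfl⟩, ?_⟩
  · rintro _ ⟨u, hu, rfl⟩
    have hqu := hq u
    rw [mem_sphere_zero_iff_norm.1 hu] at hqu
    linarith [(abs_le.1 (hρδ u hu)).1]
  · linarith [hqv δ, (abs_le.1 (hρδ _ hδv)).2]

namespace Matrix.PosSemidef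

variable {d : ℕ} {A : Matrix (Fin d) (Fin d) ℝ}

noncomputable def sqrt (hA : A.PosSemidef) : Matrix (Fin d) (Fin d) ℝ :=
  (hA.1.eigenvectorUnitary : Matrix (Fin d) (Fin d) ℝ) *
    diagonal (fun i => Real.sqrt (hA.1.eigenvalues i)) *
    (star hA.1.eigenvectorUnitary : Matrix (Fin d) (Fin d) ℝ)

lemma sqrt_mul_self (hA : A.PosSemidef) : hA.sqrt * hA.sqrt = A := by
  rw [sqrt, ← Unitary.conjStarAlgAut_apply (S := ℝ), ← map_mul, diagonal_mul_diagonal]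
  conv_rhs => rw [hA.1.spectral_theorem]
  congr 2
  ext i
  simp [Real.mul_self_sqrt (hA.eigenvalues_nonneg i)]

lemma isHermitian_sqrt (hA : A.PosSemidef) : hA.sqrt.IsHermitian := by
  rw [sqrt, ← Unitary.conjStarAlgAut_apply (S := ℝ)]
  exact (isHermitian_diagonal (n := Fin d) (α := ℝ) _).isSelfAdjoint.map
    (Unitary.conjStarAlgAut ℝ _ hA.1.eigenvectorUnitary)

end Matrix.PosSemidef

namespace quadForm

variable {d : ℕ}

lemma smul (M : Matrix (Fin d) (Fin d) ℝ) (t : ℝ) (v : EuclideanSpace ℝ (Fin d)) :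
    quadForm M (t • v) = t ^ 2 * quadForm M v := by
  simp only [quadForm, map_smul, real_inner_smul_left, real_inner_smul_right]
  ring

lemma one (v : EuclideanSpace ℝ (Fin d)) : quadForm 1 v = ‖v‖ ^ 2 := by
  rw [quadForm, toLpLin_one, LinearMap.id_apply, real_inner_self_eq_norm_sq]

lemma mul_mul_of_isHermitian {B : Matrix (Fin d) (Fin d) ℝ} (hB : B.IsHermitian)
    (N : Matrix (Fin d) (Fin d) ℝ) (u : EuclideanSpace ℝ (Fin d)) :
    quadForm (B * N * B) u = quadForm N (toEuclideanLin B u) := by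
  rw [quadForm, quadForm, toLpLin_mul_same, toLpLin_mul_same, LinearMap.comp_apply,
    LinearMap.comp_apply, ← isSymmetric_toEuclideanLin_iff.mpr hB]

lemma of_eigenvector {M : Matrix (Fin d) (Fin d) ℝ} {μ : ℝ} {v : EuclideanSpace ℝ (Fin d)}
    (hv : toEuclideanLin M v = μ • v) : quadForm M v = μ * ‖v‖ ^ 2 := by
  rw [quadForm, hv, real_inner_smul_right, real_inner_self_eq_norm_sq]

end quadForm

lemma minEig_of_isEmpty {d : ℕ} [IsEmpty (Fin d)] (M : Matrix (Fin d) (Fin d) ℝ) :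
    minEig M = 0 := by
  rw [minEig, spectrum.of_subsingleton, Real.sInf_empty]

namespace Matrix.IsHermitian

variable {d : ℕ} {M : Matrix (Fin d) (Fin d) ℝ}

lemma minEig_mem_range_eigenvalues [Nonempty (Fin d)] (hM : M.IsHermitian) :
    minEig M ∈ Set.range hM.eigenvalues := by
  rw [minEig, hM.spectrum_real_eq_range_eigenvalues]
  exact (Set.range_nonempty _).csInf_mem (Set.finite_range _)

lemma minEig_le_eigenvalues (hM : M.IsHermitian) (i : Fin d) : minEig M ≤ hM.eigenvalues i := by
  rw [minEig, hM.spectrum_real_eq_range_eigenvalues]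
  exact csInf_le (Set.finite_range _).bddBelow ⟨i, rfl⟩

lemma toEuclideanLin_eigenvectorBasis (hM : M.IsHermitian) (i : Fin d) :
    toEuclideanLin M (hM.eigenvectorBasis i) = hM.eigenvalues i • hM.eigenvectorBasis i := by
  rw [toLpLin_apply, hM.mulVec_eigenvectorBasis]
  rfl

lemma minEig_mul_norm_sq_le_quadForm (hM : M.IsHermitian) (v : EuclideanSpace ℝ (Fin d)) :
    minEig M * ‖v‖ ^ 2 ≤ quadForm M v := by
  set b := hM.eigenvectorBasis
  have hcoord (i : Fin d) :
      inner ℝ (b i) (toEuclideanLin M v) = hM.eigenvalues i * inner ℝ (b i) v := by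
    rw [← isSymmetric_toEuclideanLin_iff.mpr hM, hM.toEuclideanLin_eigenvectorBasis,
      real_inner_smul_left]
  calc minEig M * ‖v‖ ^ 2 = ∑ i, minEig M * inner ℝ (b i) v ^ 2 := by
        rw [← b.sum_sq_inner_right, Finset.mul_sum]
    _ ≤ ∑ i, hM.eigenvalues i * inner ℝ (b i) v ^ 2 := by
        gcongr with i
        exact hM.minEig_le_eigenvalues i
    _ = quadForm M v := by
        rw [quadForm, ← b.sum_inner_mul_inner]
        refine Finset.sum_congr rfl fun i _ => ?_
        rw [hcoord, real_inner_comm]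
        ring

lemma exists_unit_eigenvector_minEig [Nonempty (Fin d)] (hM : M.IsHermitian) :
    ∃ v : EuclideanSpace ℝ (Fin d), ‖v‖ = 1 ∧ toEuclideanLin M v = minEig M • v := by
  obtain ⟨i, hi⟩ := hM.minEig_mem_range_eigenvalues
  exact ⟨hM.eigenvectorBasis i, hM.eigenvectorBasis.orthonormal.1 i,
    hi ▸ hM.toEuclideanLin_eigenvectorBasis i⟩

end Matrix.IsHermitian

section sqrtInv

variable {d : ℕ}

lemma sqrtInv_eq_inv_sqrt {A : Matrix (Fin d) (Fin d) ℝ} (hA : A.PosSemidef) :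
    sqrtInv A = hA.sqrt⁻¹ :=
  dif_pos hA

lemma isHermitian_sqrtInv (A : Matrix (Fin d) (Fin d) ℝ) : (sqrtInv A).IsHermitian := by
  by_cases hA : A.PosSemidef
  · rw [sqrtInv_eq_inv_sqrt hA]
    exact hA.isHermitian_sqrt.inv
  · rw [sqrtInv, dif_neg hA]
    exact isHermitian_zero

lemma sqrtInv_mul_mul_sqrtInv {A : Matrix (Fin d) (Fin d) ℝ} (hA : A.PosDef) :
    sqrtInv A * A * sqrtInv A = 1 := by
  set S := hA.posSemidef.sqrt
  have hSS : S * S = A := hA.posSemidef.sqrt_mul_self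
  have hS : IsUnit S.det := by
    refine isUnit_iff_ne_zero.2 fun h => hA.det_pos.ne' ?_
    rw [← hSS, det_mul, h, mul_zero]
  have : S⁻¹ * (S * S) * S⁻¹ = 1 := by
    rw [← mul_assoc, nonsing_inv_mul _ hS, one_mul, mul_nonsing_inv _ hS]
  rwa [hSS, ← sqrtInv_eq_inv_sqrt] at this

end sqrtInv

lemma setOf_quadForm_eq_sq_eq_image {d : ℕ} {A B : Matrix (Fin d) (Fin d) ℝ}
    (hB : B.IsHermitian) (hBAB : B * A * B = 1) (g : EuclideanSpace ℝ (Fin d) → ℝ) {δ : ℝ}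
    (hδ : 0 ≤ δ) :
    {x : ℝ | ∃ h, quadForm A h = δ ^ 2 ∧ x = g h} =
      (fun u => g (toEuclideanLin B u)) '' sphere 0 δ := by
  have hA (u : EuclideanSpace ℝ (Fin d)) : quadForm A (toEuclideanLin B u) = ‖u‖ ^ 2 := by
    rw [← quadForm.mul_mul_of_isHermitian hB, hBAB, quadForm.one]
  have hsphere (u : EuclideanSpace ℝ (Fin d)) : u ∈ sphere 0 δ ↔ ‖u‖ ^ 2 = δ ^ 2 := by
    rw [mem_sphere_zero_iff_norm, sq_eq_sq₀ (norm_nonneg u) hδ]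
  ext x
  constructor
  · rintro ⟨h, hh, rfl⟩
    have hBAh : toEuclideanLin B (toEuclideanLin (A * B) h) = h := by
      rw [← LinearMap.comp_apply, ← toLpLin_mul_same, ← mul_assoc, hBAB, toLpLin_one,
        LinearMap.id_apply]
    refine ⟨toEuclideanLin (A * B) h, (hsphere _).2 ?_, congrArg g hBAh⟩
    rw [← hA, hBAh, hh]
  · rintro ⟨u, hu, rfl⟩
    exact ⟨toEuclideanLin B u, by rw [hA, (hsphere u).1 hu], rfl⟩

/-- Asymptotic form of the δ-worth: quadratic minimisation with o(‖h‖²) remainder. -/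
theorem stmt_6 {d : ℕ} (A I : Matrix (Fin d) (Fin d) ℝ) (hA : A.PosDef) (hI : I.PosDef)
    (g r : EuclideanSpace ℝ (Fin d) → ℝ)
    (hg : ∀ h, g h = (1 / 2) * quadForm I h + r h)
    (hr : r =o[nhds 0] fun h => ‖h‖ ^ 2) :
    (fun δ : ℝ => sInf {x : ℝ | ∃ h, quadForm A h = δ ^ 2 ∧ x = g h}
        - (1 / 2) * δ ^ 2 * minEig (sqrtInv A * I * sqrtInv A))
      =o[nhdsWithin 0 (Set.Ioi 0)] fun δ => δ ^ 2 := by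
  set B := sqrtInv A
  set M := B * I * B
  have hB : B.IsHermitian := isHermitian_sqrtInv A
  have hM : M.IsHermitian := by
    simpa only [hB.eq] using isHermitian_mul_mul_conjTranspose B hI.isHermitian
  have hgB (u : EuclideanSpace ℝ (Fin d)) :
      g (toEuclideanLin B u) = 1 / 2 * quadForm M u + r (toEuclideanLin B u) := by
    rw [hg, quadForm.mul_mul_of_isHermitian hB]
  refine IsLittleO.congr' (f₁ := fun δ => sInf ((fun u => 1 / 2 * quadForm M u +
    r (toEuclideanLin B u)) '' sphere 0 δ) - 1 / 2 * minEig M * δ ^ 2) ?_ ?_ EventuallyEq.rfl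
  · rcases isEmpty_or_nonempty (Fin d) with hd | hd
    · refine (isLittleO_zero _ _).congr' ?_ EventuallyEq.rfl
      filter_upwards [self_mem_nhdsWithin] with δ (hδ : 0 < δ)
      rw [sphere_eq_empty_of_subsingleton hδ.ne', Set.image_empty, Real.sInf_empty,
        minEig_of_isEmpty]
      ring
    · obtain ⟨v, hv, hMv⟩ := hM.exists_unit_eigenvector_minEig
      exact isLittleO_sInf_image_sphere_sub
        (fun u => by linarith [hM.minEig_mul_norm_sq_le_quadForm u]) hv
        (fun t => by rw [quadForm.smul, quadForm.of_eigenvector hMv, hv]; ring)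
        (hr.comp_continuousLinearMap_sq (toEuclideanLin B).toContinuousLinearMap)
  · filter_upwards [self_mem_nhdsWithin] with δ (hδ : 0 < δ)
    rw [setOf_quadForm_eq_sq_eq_image hB (sqrtInv_mul_mul_sqrtInv hA) g hδ.le]
    simp only [hgB]
    ring
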